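/- arXiv:2204.09951 — 3 statements merged into one kernel-verified Lean document; each statement's English description precedes it below -/
import Mathlib

section
/- Let w_ab, w_bc, w_ca, w_minus ≥ 0 and n ≥ 100, 100/n ≤ ε ≤ 1/500 be reals. Suppose the three pairwise inequalities w_ab + w_bc ≤ 2n + 2εn, w_bc + w_ca ≤ 2n + 2εn, w_ca + w_ab ≤ 2n + 2εn hold, that w_minus ≤ 27εn, and that T is a real with T ≥ (n-3)/6 such that (1-ε)·(2(n-3) + T) ≤ w_bc + w_ca + w_minus + T/2. Then we obtain a contradiction; i.e., no such T exists. -/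
/-!
Adding the bound on `w_bc + w_ca` to the bound on `w_minus` turns the cut comparison into
`(1/2 - ε) T ≤ 31 ε n + 6 (1 - ε)`. Since `ε n ≥ 100` absorbs the constant and `ε ≤ 1/500`,
the right side is below `n / 16`, while `T ≥ (n - 3)/6` makes the left side about `n / 12`.
-/

lemma half_sub_mul_le_of_cut_le {S ε n T : ℝ} (hS : S ≤ 2 * n + 29 * ε * n)
    (hcut : (1 - ε) * (2 * (n - 3) + T) ≤ S + T / 2) :
    (1 / 2 - ε) * T ≤ 31 * ε * n + 6 * (1 - ε) := by
  linarith

lemma thirty_one_mul_add_lt_half_sub_mul {ε n T : ℝ} (hn : 100 ≤ n) (hεn : 100 ≤ ε * n) (hε : ε ≤ 1 / 500)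
    (hT : (n - 3) / 6 ≤ T) :
    31 * ε * n + 6 * (1 - ε) < (1 / 2 - ε) * T := by
  have hε0 : 0 ≤ ε := by nlinarith
  have hεn_le : ε * n ≤ n / 500 := by nlinarith
  have hT_coeff : (1 / 2 - 1 / 500) * ((n - 3) / 6) ≤ (1 / 2 - ε) * T :=
    mul_le_mul (by linarith) hT (by linarith) (by linarith)
  nlinarith

theorem stmt_15_general (w_bc w_ca w_minus n ε T : ℝ)
    (hn : 100 ≤ n) (hε1 : 100 / n ≤ ε) (hε2 : ε ≤ 1 / 500)
    (h2 : w_bc + w_ca ≤ 2 * n + 2 * ε * n)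
    (hm : w_minus ≤ 27 * ε * n)
    (hT : (n - 3) / 6 ≤ T)
    (hcut : (1 - ε) * (2 * (n - 3) + T) ≤ w_bc + w_ca + w_minus + T / 2) :
    False := by
  have hεn : 100 ≤ ε * n := (div_le_iff₀ (by linarith)).mp hε1
  have hS : w_bc + w_ca + w_minus ≤ 2 * n + 29 * ε * n := by linarith
  exact (half_sub_mul_le_of_cut_le hS hcut).not_gt (thirty_one_mul_add_lt_half_sub_mul hn hεn hε2 hT)

theorem stmt_15 (w_ab w_bc w_ca w_minus n ε T : ℝ)
    (hab : 0 ≤ w_ab) (hbc : 0 ≤ w_bc) (hca : 0 ≤ w_ca) (hminus : 0 ≤ w_minus)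
    (hn : 100 ≤ n) (hε1 : 100 / n ≤ ε) (hε2 : ε ≤ 1 / 500)
    (h1 : w_ab + w_bc ≤ 2 * n + 2 * ε * n)
    (h2 : w_bc + w_ca ≤ 2 * n + 2 * ε * n)
    (h3 : w_ca + w_ab ≤ 2 * n + 2 * ε * n)
    (hm : w_minus ≤ 27 * ε * n)
    (hT : (n - 3) / 6 ≤ T)
    (hcut : (1 - ε) * (2 * (n - 3) + T) ≤ w_bc + w_ca + w_minus + T / 2) :
    False :=
  stmt_15_general w_bc w_ca w_minus n ε T hn hε1 hε2 h2 hm hT hcut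
end

section
/- Let H = (V, F, w) be a weighted hypergraph with positive hyperedge weights, in which for each hyperedge f the strength κ_f (the maximum k such that some vertex-induced subhypergraph containing f has all cuts of weight at least k) is positive. Then ∑_{f ∈ F} w(f)/κ_f ≤ n − C, where n = |V| and C is the number of connected components of H. -/
/-- The simple graph on the vertex set recording hypergraph connectivity:
two distinct vertices are adjacent iff some hyperedge contains both. -/
def hypGraph {V : Type*} (F : Finset (Finset V)) : SimpleGraph V where
  Adj u v := u ≠ v ∧ ∃ f ∈ F, u ∈ f ∧ v ∈ f
  symm := by
    constructor
    rintro u v ⟨huv, f, hfF, hu, hv⟩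
    exact ⟨huv.symm, f, hfF, hv, hu⟩
  loopless := by constructor; rintro v ⟨hvv, -⟩; exact hvv rfl

/-- The weight of the cut `(S, U \ S)` in the subhypergraph induced on `U`:
the total weight of hyperedges contained in `U` having endpoints on both sides. -/
noncomputable def inducedCutVal {V : Type*} [DecidableEq V]
    (F : Finset (Finset V)) (w : Finset V → ℝ) (U S : Finset V) : ℝ :=
  ∑ f ∈ F.filter (fun f => f ⊆ U ∧ (f ∩ S).Nonempty ∧ (f \ S).Nonempty), w f

/-- The strength of a hyperedge `f`: the supremum of all `k` such that some
vertex-induced subhypergraph containing `f` has all nontrivial cuts of weight at least `k`. -/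
noncomputable def hypStrength {V : Type*} [DecidableEq V]
    (F : Finset (Finset V)) (w : Finset V → ℝ) (f : Finset V) : ℝ :=
  sSup {k : ℝ | ∃ U : Finset V, f ⊆ U ∧
    ∀ S : Finset V, S ⊆ U → S.Nonempty → (U \ S).Nonempty → k ≤ inducedCutVal F w U S}

/-!
Induct on the set `F' ⊆ F` of hyperedges, strengths always being taken in `F`. Take a connected
component `U` of `hypGraph F'` containing a hyperedge, and a minimum cut `(S, U \ S)` of the
subhypergraph induced on `U`, of value `c`. Cut values only grow from `F'` to `F`, so `U` witnesses
that every hyperedge crossing this cut has strength at least `c`; these hyperedges therefore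
contribute at most `∑ w / c = 1`. Deleting them separates `S` from `U \ S`, so the number of
components grows by at least one.
-/

open Finset

namespace SimpleGraph

variable {V : Type*} {G H : SimpleGraph V}

lemma card_connectedComponent_bot :
    Nat.card (⊥ : SimpleGraph V).ConnectedComponent = Nat.card V := by
  refine (Nat.card_eq_of_bijective (⊥ : SimpleGraph V).connectedComponentMk ⟨?_, ?_⟩).symm
  · intro u v huv
    exact reachable_bot.mp (ConnectedComponent.eq.mp huv)
  · exact fun c => c.exists_rep

lemma card_connectedComponent_lt_of_le [Finite V] (hle : G ≤ H) {u v : V}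
    (hH : H.Reachable u v) (hG : ¬G.Reachable u v) :
    Nat.card H.ConnectedComponent < Nat.card G.ConnectedComponent := by
  classical
  cases nonempty_fintype V
  simp only [Nat.card_eq_fintype_card]
  refine Fintype.card_lt_of_surjective_not_injective _
    (ConnectedComponent.surjective_map_ofLE hle) fun hinj => hG ?_
  refine ConnectedComponent.eq.mp (hinj ?_)
  simpa only [ConnectedComponent.map_mk, Hom.ofLE_apply] using ConnectedComponent.eq.mpr hH

end SimpleGraph

section HypGraph

variable {V : Type*} {F F' : Finset (Finset V)} {f : Finset V}

lemma hypGraph_empty : hypGraph (∅ : Finset (Finset V)) = ⊥ := by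
  ext u v
  simp [hypGraph]

lemma hypGraph_mono (h : F' ⊆ F) : hypGraph F' ≤ hypGraph F :=
  fun _ _ ⟨huv, f, hf, hu, hv⟩ => ⟨huv, f, h hf, hu, hv⟩

lemma hypGraph_reachable_of_mem (hf : f ∈ F) {u v : V} (hu : u ∈ f) (hv : v ∈ f) :
    (hypGraph F).Reachable u v := by
  rcases eq_or_ne u v with rfl | huv
  · rfl
  · exact SimpleGraph.Adj.reachable ⟨huv, f, hf, hu, hv⟩

end HypGraph

section Cuts

variable {V : Type*} [DecidableEq V] {F F' : Finset (Finset V)} {w : Finset V → ℝ}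
  {f U S : Finset V}

def crossingEdges (F : Finset (Finset V)) (U S : Finset V) : Finset (Finset V) :=
  F.filter fun f => f ⊆ U ∧ (f ∩ S).Nonempty ∧ (f \ S).Nonempty

lemma inducedCutVal_eq_sum_crossingEdges :
    inducedCutVal F w U S = ∑ f ∈ crossingEdges F U S, w f := rfl

lemma inducedCutVal_mono (h : F' ⊆ F) (hw : ∀ f ∈ F, 0 ≤ w f) :
    inducedCutVal F' w U S ≤ inducedCutVal F w U S :=
  sum_le_sum_of_subset_of_nonneg (filter_subset_filter _ h)
    fun f hf _ => hw f (filter_subset _ _ hf)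

lemma exists_min_inducedCutVal (hU : U.Nontrivial) (F : Finset (Finset V)) (w : Finset V → ℝ) :
    ∃ S ⊆ U, S.Nonempty ∧ (U \ S).Nonempty ∧ ∀ S' ⊆ U, S'.Nonempty → (U \ S').Nonempty →
      inducedCutVal F w U S ≤ inducedCutVal F w U S' := by
  obtain ⟨u, hu, v, hv, huv⟩ := hU
  have hcut : {u} ∈ U.powerset.filter fun S => S.Nonempty ∧ (U \ S).Nonempty := by
    rw [mem_filter, mem_powerset]
    exact ⟨singleton_subset_iff.mpr hu, singleton_nonempty u,
      ⟨v, mem_sdiff.mpr ⟨hv, notMem_singleton.mpr huv.symm⟩⟩⟩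
  obtain ⟨S, hS, hmin⟩ := exists_min_image _ (inducedCutVal F w U) ⟨_, hcut⟩
  simp only [mem_filter, mem_powerset] at hS
  exact ⟨S, hS.1, hS.2.1, hS.2.2, fun S' hS' hne hne' => hmin S' (by simp [hS', hne, hne'])⟩

end Cuts

lemma Finset.sum_div_le_one_of_sum_le {ι : Type*} {s : Finset ι} {a b : ι → ℝ}
    (ha : ∀ i ∈ s, 0 ≤ a i) (hb : ∀ i ∈ s, ∑ j ∈ s, a j ≤ b i) :
    ∑ i ∈ s, a i / b i ≤ 1 := by
  rcases (sum_nonneg ha).eq_or_lt with hzero | hpos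
  · have hai : ∀ i ∈ s, a i = 0 := (sum_eq_zero_iff_of_nonneg ha).mp hzero.symm
    calc ∑ i ∈ s, a i / b i = ∑ _i ∈ s, (0 : ℝ) := sum_congr rfl fun i hi => by simp [hai i hi]
      _ ≤ 1 := by simp
  · calc ∑ i ∈ s, a i / b i ≤ ∑ i ∈ s, a i / ∑ j ∈ s, a j :=
          sum_le_sum fun i hi => div_le_div_of_nonneg_left (ha i hi) hpos (hb i hi)
      _ = 1 := by rw [← sum_div, div_self hpos.ne']

section Strength

variable {V : Type*} [DecidableEq V] {F : Finset (Finset V)} {w : Finset V → ℝ}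
  {f U S : Finset V}

lemma inducedCutVal_le_sum_abs : inducedCutVal F w U S ≤ ∑ g ∈ F, |w g| :=
  (sum_le_sum fun g _ => le_abs_self (w g)).trans
    (sum_le_sum_of_subset_of_nonneg (filter_subset _ _) fun g _ _ => abs_nonneg (w g))

lemma nontrivial_of_hypStrength_pos (h : 0 < hypStrength F w f) : f.Nontrivial := by
  by_contra hf
  have hsub : (f : Set V).Subsingleton := Set.not_nontrivial_iff.mp hf
  have huniv : {k : ℝ | ∃ U : Finset V, f ⊆ U ∧ ∀ S : Finset V, S ⊆ U → S.Nonempty →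
      (U \ S).Nonempty → k ≤ inducedCutVal F w U S} = Set.univ := by
    refine Set.eq_univ_of_forall fun k => ⟨f, subset_rfl, fun S hS ⟨u, hu⟩ ⟨v, hv⟩ => ?_⟩
    rw [mem_sdiff] at hv
    exact absurd (hsub (mem_coe.mpr (hS hu)) (mem_coe.mpr hv.1) ▸ hu) hv.2
  rw [hypStrength, huniv, Real.sSup_univ] at h
  exact h.false

lemma le_hypStrength {c : ℝ} (hf : f.Nontrivial) (hfU : f ⊆ U)
    (hc : ∀ S ⊆ U, S.Nonempty → (U \ S).Nonempty → c ≤ inducedCutVal F w U S) :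
    c ≤ hypStrength F w f := by
  obtain ⟨u, hu, v, hv, huv⟩ := hf
  refine le_csSup ⟨∑ g ∈ F, |w g|, ?_⟩ ⟨U, hfU, hc⟩
  rintro k ⟨U', hfU', hk⟩
  refine (hk {u} (singleton_subset_iff.mpr (hfU' hu)) (singleton_nonempty u)
    ⟨v, mem_sdiff.mpr ⟨hfU' hv, notMem_singleton.mpr huv.symm⟩⟩).trans inducedCutVal_le_sum_abs

end Strength

section Components

variable {V : Type*} [DecidableEq V] {F F' : Finset (Finset V)} {w : Finset V → ℝ}
  {U S : Finset V}

lemma not_reachable_hypGraph_sdiff_crossingEdges (hSU : S ⊆ U)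
    (hU : ∀ f ∈ F, ∀ a ∈ f, a ∈ U → f ⊆ U) {u v : V} (hu : u ∈ S) (hv : v ∉ S) :
    ¬(hypGraph (F \ crossingEdges F U S)).Reachable u v := by
  rintro ⟨p⟩
  obtain ⟨d, -, hd₁, hd₂⟩ := p.exists_boundary_dart S hu hv
  obtain ⟨-, f, hf, hf₁, hf₂⟩ := d.adj
  rw [mem_sdiff] at hf
  exact hf.2 <| mem_filter.mpr ⟨hf.1, hU f hf.1 _ hf₁ (hSU hd₁),
    ⟨_, mem_inter.mpr ⟨hf₁, hd₁⟩⟩, ⟨_, mem_sdiff.mpr ⟨hf₂, hd₂⟩⟩⟩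

variable [Fintype V]

lemma exists_sum_div_hypStrength_le_one_lt_card (hF' : F' ⊆ F) (hw : ∀ f ∈ F, 0 ≤ w f)
    (hκ : ∀ f ∈ F', 0 < hypStrength F w f) (hne : F'.Nonempty) :
    ∃ X ⊆ F', ∑ f ∈ X, w f / hypStrength F w f ≤ 1 ∧
      Nat.card (hypGraph F').ConnectedComponent < Nat.card (hypGraph (F' \ X)).ConnectedComponent := by
  classical
  obtain ⟨f₀, hf₀⟩ := hne
  obtain ⟨u, hu, v, hv, huv⟩ := nontrivial_of_hypStrength_pos (hκ f₀ hf₀)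
  set U := univ.filter ((hypGraph F').Reachable u)
  have hU : ∀ f ∈ F', ∀ a ∈ f, a ∈ U → f ⊆ U := fun f hf a ha haU b hb => by
    simp only [U, mem_filter, mem_univ, true_and] at haU ⊢
    exact haU.trans (hypGraph_reachable_of_mem hf ha hb)
  have hf₀U : f₀ ⊆ U := hU f₀ hf₀ u hu (by simp [U])
  obtain ⟨S, hSU, ⟨s, hs⟩, ⟨t, ht⟩, hmin⟩ :=
    exists_min_inducedCutVal ⟨u, hf₀U hu, v, hf₀U hv, huv⟩ F' w
  rw [mem_sdiff] at ht
  refine ⟨crossingEdges F' U S, filter_subset _ _, ?_, ?_⟩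
  · refine sum_div_le_one_of_sum_le (fun f hf => hw f (hF' (filter_subset _ _ hf))) fun f hf => ?_
    obtain ⟨hfF', hfU, -⟩ := mem_filter.mp hf
    rw [← inducedCutVal_eq_sum_crossingEdges]
    exact le_hypStrength (nontrivial_of_hypStrength_pos (hκ f hfF')) hfU
      fun S' hS' hne hne' => (hmin S' hS' hne hne').trans (inducedCutVal_mono hF' hw)
  · have hst : (hypGraph F').Reachable s t := by
      have hs' := hSU hs
      simp only [U, mem_filter, mem_univ, true_and] at hs' ht
      exact hs'.symm.trans ht.1
    exact SimpleGraph.card_connectedComponent_lt_of_le (hypGraph_mono sdiff_subset) hst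
      (not_reachable_hypGraph_sdiff_crossingEdges hSU hU hs ht.2)

lemma sum_div_hypStrength_le (hw : ∀ f ∈ F, 0 ≤ w f) (hκ : ∀ f ∈ F, 0 < hypStrength F w f)
    (hF' : F' ⊆ F) :
    ∑ f ∈ F', w f / hypStrength F w f ≤
      Fintype.card V - (Nat.card (hypGraph F').ConnectedComponent : ℝ) := by
  induction F' using Finset.strongInduction with
  | H F' ih =>
  rcases F'.eq_empty_or_nonempty with rfl | hne
  · rw [hypGraph_empty, SimpleGraph.card_connectedComponent_bot, Nat.card_eq_fintype_card]
    simp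
  obtain ⟨X, hX, hsum, hcard⟩ :=
    exists_sum_div_hypStrength_le_one_lt_card hF' hw (fun f hf => hκ f (hF' hf)) hne
  have hssub : F' \ X ⊂ F' := ssubset_of_subset_of_ne sdiff_subset fun h => by
    rw [h] at hcard
    exact hcard.false
  have hrest := ih _ hssub (sdiff_subset.trans hF')
  have hcard' : (Nat.card (hypGraph F').ConnectedComponent : ℝ) + 1 ≤
      Nat.card (hypGraph (F' \ X)).ConnectedComponent := by
    exact_mod_cast hcard
  rw [← sum_sdiff hX]
  linarith

end Components

theorem stmt_16 {V : Type*} [Fintype V] [DecidableEq V] (n : ℕ) (hn : Fintype.card V = n)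
    (F : Finset (Finset V)) (w : Finset V → ℝ)
    (hw : ∀ f ∈ F, 0 < w f)
    (hκ : ∀ f ∈ F, 0 < hypStrength F w f) :
    ∑ f ∈ F, w f / hypStrength F w f ≤
      (n : ℝ) - (Nat.card (hypGraph F).ConnectedComponent : ℝ) := by
  subst hn
  exact sum_div_hypStrength_le (fun f hf => (hw f hf).le) hκ subset_rfl
end

section
/- Let G = (V, E) be a weighted hypergraph whose minimum cut value (over nontrivial cuts) is positive, and reweight every hyperedge f by dividing its weight by its strength κ_f. Then the minimum cut value of the reweighted hypergraph equals exactly 1. -/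
/-- The value of the cut `(S, V \ S)` of the whole hypergraph after reweighting
every hyperedge by the inverse of its strength. -/
noncomputable def reweightedCutVal {V : Type*} [Fintype V] [DecidableEq V]
    (F : Finset (Finset V)) (w : Finset V → ℝ) (S : Finset V) : ℝ :=
  ∑ f ∈ F.filter (fun f => (f ∩ S).Nonempty ∧ (f \ S).Nonempty),
    w f / hypStrength F w f


/-!
Let `k > 0` be the minimum cut value. The whole vertex set witnesses `k ≤ κ_f` for every
hyperedge `f`. Conversely, if `f` crosses a cut `S` and `U ⊇ f` has all induced cuts of weight
at least `k'`, then the induced cut `S ∩ U` of `U` is crossed by `f` and is part of `S`, so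
`k' ≤ w(S)`; hence `κ_f ≤ w(S)`. Thus every hyperedge crossing `S` has `k ≤ κ_f ≤ w(S)`, so the
reweighted value of `S` is at least `w(S) / w(S) = 1`, with equality when `w(S) = k`.
-/

open Finset

section Cuts

variable {V : Type*} [DecidableEq V] (F : Finset (Finset V)) (w : Finset V → ℝ)

lemma inducedCutVal_nonneg (hw : ∀ f ∈ F, 0 ≤ w f) (U S : Finset V) :
    0 ≤ inducedCutVal F w U S :=
  sum_nonneg fun f hf => hw f (mem_filter.mp hf).1

lemma inducedCutVal_inter_le_of_subset (hw : ∀ f ∈ F, 0 ≤ w f) {U U' : Finset V}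
    (hUU' : U ⊆ U') (S : Finset V) :
    inducedCutVal F w U (S ∩ U) ≤ inducedCutVal F w U' S := by
  refine sum_le_sum_of_subset_of_nonneg ?_ fun f hf _ => hw f (mem_filter.mp hf).1
  intro g hg
  simp only [mem_filter] at hg ⊢
  obtain ⟨hgF, hgU, ⟨a, ha⟩, ⟨b, hb⟩⟩ := hg
  simp only [mem_inter, mem_sdiff, not_and] at ha hb
  exact ⟨hgF, hgU.trans hUU', ⟨a, mem_inter.mpr ⟨ha.1, ha.2.1⟩⟩,
    ⟨b, mem_sdiff.mpr ⟨hb.1, fun hbS => hb.2 hbS (hgU hb.1)⟩⟩⟩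

lemma inducedCutVal_univ [Fintype V] (S : Finset V) :
    inducedCutVal F w univ S =
      ∑ f ∈ F.filter (fun f => (f ∩ S).Nonempty ∧ (f \ S).Nonempty), w f := by
  simp only [inducedCutVal, subset_univ, true_and]

end Cuts

section Strength

variable {V : Type*} [Fintype V] [DecidableEq V] {F : Finset (Finset V)} {w : Finset V → ℝ}
  {f S : Finset V}

lemma le_inducedCutVal_of_crosses (hw : ∀ f ∈ F, 0 ≤ w f)
    (hfS : (f ∩ S).Nonempty) (hfS' : (f \ S).Nonempty) {k : ℝ} {U : Finset V} (hfU : f ⊆ U)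
    (hU : ∀ S' : Finset V, S' ⊆ U → S'.Nonempty → (U \ S').Nonempty →
      k ≤ inducedCutVal F w U S') :
    k ≤ inducedCutVal F w univ S := by
  obtain ⟨a, ha⟩ := hfS
  obtain ⟨b, hb⟩ := hfS'
  rw [mem_inter] at ha
  rw [mem_sdiff] at hb
  have hSU : (S ∩ U).Nonempty := ⟨a, mem_inter.mpr ⟨ha.2, hfU ha.1⟩⟩
  have hUS : (U \ (S ∩ U)).Nonempty :=
    ⟨b, mem_sdiff.mpr ⟨hfU hb.1, fun hbSU => hb.2 (mem_inter.mp hbSU).1⟩⟩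
  exact (hU _ inter_subset_right hSU hUS).trans
    (inducedCutVal_inter_le_of_subset F w hw (subset_univ U) S)

lemma hypStrength_le_inducedCutVal (hw : ∀ f ∈ F, 0 ≤ w f)
    (hfS : (f ∩ S).Nonempty) (hfS' : (f \ S).Nonempty) :
    hypStrength F w f ≤ inducedCutVal F w univ S :=
  Real.sSup_le (fun _ ⟨_, hfU, hU⟩ => le_inducedCutVal_of_crosses hw hfS hfS' hfU hU)
    (inducedCutVal_nonneg F w hw univ S)

lemma le_hypStrength_s17 (hw : ∀ f ∈ F, 0 ≤ w f)
    (hfS : (f ∩ S).Nonempty) (hfS' : (f \ S).Nonempty) {k : ℝ}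
    (hk : ∀ S' : Finset V, S'.Nonempty → S' ≠ univ → k ≤ inducedCutVal F w univ S') :
    k ≤ hypStrength F w f := by
  refine le_csSup ⟨inducedCutVal F w univ S,
    fun _ ⟨_, hfU, hU⟩ => le_inducedCutVal_of_crosses hw hfS hfS' hfU hU⟩
    ⟨univ, subset_univ f, fun S' _ hS' hS'c => hk S' hS' ?_⟩
  rintro rfl
  simp at hS'c

end Strength

section Reweighted

variable {V : Type*} [Fintype V] [DecidableEq V] {F : Finset (Finset V)} {w : Finset V → ℝ}

lemma one_le_reweightedCutVal (hw : ∀ f ∈ F, 0 ≤ w f) {k : ℝ} (hk : 0 < k)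
    (hmin : ∀ S' : Finset V, S'.Nonempty → S' ≠ univ → k ≤ inducedCutVal F w univ S')
    {S : Finset V} (hS : S.Nonempty) (hS' : S ≠ univ) :
    1 ≤ reweightedCutVal F w S := by
  have hcut : 0 < inducedCutVal F w univ S := hk.trans_le (hmin S hS hS')
  calc (1 : ℝ) = inducedCutVal F w univ S / inducedCutVal F w univ S := (div_self hcut.ne').symm
    _ = ∑ f ∈ F.filter (fun f => (f ∩ S).Nonempty ∧ (f \ S).Nonempty),
          w f / inducedCutVal F w univ S := by rw [inducedCutVal_univ, sum_div]
    _ ≤ reweightedCutVal F w S := by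
      refine sum_le_sum fun f hf => ?_
      obtain ⟨hfF, hfS, hfS'⟩ := mem_filter.mp hf
      exact div_le_div_of_nonneg_left (hw f hfF) (hk.trans_le (le_hypStrength_s17 hw hfS hfS' hmin))
        (hypStrength_le_inducedCutVal hw hfS hfS')

lemma reweightedCutVal_eq_one_of_isMinCut (hw : ∀ f ∈ F, 0 ≤ w f) {S₀ : Finset V}
    (hpos : 0 < inducedCutVal F w univ S₀)
    (hmin : ∀ S : Finset V, S.Nonempty → S ≠ univ →
      inducedCutVal F w univ S₀ ≤ inducedCutVal F w univ S) :
    reweightedCutVal F w S₀ = 1 := by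
  have hstrength : ∀ f ∈ F.filter (fun f => (f ∩ S₀).Nonempty ∧ (f \ S₀).Nonempty),
      hypStrength F w f = inducedCutVal F w univ S₀ := fun f hf => by
    obtain ⟨-, hfS, hfS'⟩ := mem_filter.mp hf
    exact (hypStrength_le_inducedCutVal hw hfS hfS').antisymm (le_hypStrength_s17 hw hfS hfS' hmin)
  rw [reweightedCutVal, sum_congr rfl fun f hf => by rw [hstrength f hf], ← sum_div,
    ← inducedCutVal_univ, div_self hpos.ne']

end Reweighted

lemma Finset.exists_nonempty_ne_univ_forall_le {V : Type*} [Fintype V] [Nontrivial V]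
    (g : Finset V → ℝ) :
    ∃ S₀ : Finset V, S₀.Nonempty ∧ S₀ ≠ univ ∧ ∀ S, S.Nonempty → S ≠ univ → g S₀ ≤ g S := by
  classical
  obtain ⟨v⟩ := (inferInstance : Nonempty V)
  obtain ⟨S₀, hS₀, hmin⟩ := exists_min_image (univ.filter fun S : Finset V => S.Nonempty ∧ S ≠ univ)
    g ⟨{v}, by simp [singleton_ne_univ]⟩
  simp only [mem_filter, mem_univ, true_and] at hS₀ hmin
  exact ⟨S₀, hS₀.1, hS₀.2, fun S hS hS' => hmin S ⟨hS, hS'⟩⟩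

theorem stmt_17 {V : Type*} [Fintype V] [DecidableEq V] (hV : 2 ≤ Fintype.card V)
    (F : Finset (Finset V)) (w : Finset V → ℝ)
    (hw : ∀ f ∈ F, 0 ≤ w f)
    (hmin : ∀ S : Finset V, S.Nonempty → S ≠ Finset.univ →
      0 < inducedCutVal F w Finset.univ S) :
    IsLeast {x : ℝ | ∃ S : Finset V, S.Nonempty ∧ S ≠ Finset.univ ∧
      x = reweightedCutVal F w S} 1 := by
  have : Nontrivial V := Fintype.one_lt_card_iff_nontrivial.mp hV
  obtain ⟨S₀, hS₀, hS₀', hS₀min⟩ :=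
    exists_nonempty_ne_univ_forall_le (inducedCutVal F w univ)
  have hk : 0 < inducedCutVal F w univ S₀ := hmin S₀ hS₀ hS₀'
  refine ⟨⟨S₀, hS₀, hS₀', (reweightedCutVal_eq_one_of_isMinCut hw hk hS₀min).symm⟩, ?_⟩
  rintro _ ⟨S, hS, hS', rfl⟩
  exact one_le_reweightedCutVal hw hk hS₀min hS hS'
end
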